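/- In the formal power series ring in t over 𝒰_q^+, the following identities hold: 𝒲⁻(t) = E⁻(qξt)·𝒢̃(t) = 𝒢̃(t)·E⁻(q⁻¹ξt), and 𝒲⁺(t) = E⁺(q⁻¹ξt)·𝒢̃(t) = 𝒢̃(t)·E⁺(qξt). -/

import Mathlib

noncomputable section

/-- The commutator `[X,Y] = XY - YX`. -/
def br {A : Type*} [Ring A] (X Y : A) : A := X * Y - Y * X

/-- The `q`-commutator `[X,Y]_q = q·XY - q⁻¹·YX`. -/
def qbr {F : Type*} [Field F] (q : F) {A : Type*} [Ring A] [Algebra F A] (X Y : A) : A :=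
  q • (X * Y) - q⁻¹ • (Y * X)

/-- The element `E_δ = q⁻² W₁ W₀ - W₀ W₁`. -/
def Edel {F : Type*} [Field F] (q : F) {A : Type*} [Ring A] [Algebra F A] (W0 W1 : A) : A :=
  (q ^ 2)⁻¹ • (W1 * W0) - W0 * W1

/-- The elements `E_{nδ+α₀}`. -/
def Em {F : Type*} [Field F] (q : F) {A : Type*} [Ring A] [Algebra F A] (W0 W1 : A) : ℕ → A
  | 0 => W0
  | n + 1 => (q + q⁻¹)⁻¹ • br (Edel q W0 W1) (Em q W0 W1 n)

/-- The elements `E_{nδ+α₁}`. -/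
def Ep {F : Type*} [Field F] (q : F) {A : Type*} [Ring A] [Algebra F A] (W0 W1 : A) : ℕ → A
  | 0 => W1
  | n + 1 => (q + q⁻¹)⁻¹ • br (Ep q W0 W1 n) (Edel q W0 W1)

/-- The elements `E_{nδ}` (with `E_{0δ} = -(q-q⁻¹)⁻¹`). -/
def Ed {F : Type*} [Field F] (q : F) {A : Type*} [Ring A] [Algebra F A] (W0 W1 : A) : ℕ → A
  | 0 => (-(q - q⁻¹)⁻¹) • (1 : A)
  | n + 1 => (q ^ 2)⁻¹ • (Ep q W0 W1 n * W0) - W0 * Ep q W0 W1 n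

/-- The generating function with coefficients `a n`. -/
def ser {A : Type*} [Ring A] (a : ℕ → A) : PowerSeries A := PowerSeries.mk a

/-- The rescaled generating function `a(ct)`. -/
def serc {F : Type*} [Field F] {A : Type*} [Ring A] [Algebra F A] (c : F) (a : ℕ → A) :
    PowerSeries A := PowerSeries.mk fun n => c ^ n • a n

/-- The generating function `a(s)` in the first variable `s`. -/
def serS {A : Type*} [Ring A] (a : ℕ → A) : PowerSeries (PowerSeries A) :=
  PowerSeries.C (PowerSeries.mk a)

/-- The generating function `a(t)` in the second variable `t`. -/
def serT {A : Type*} [Ring A] (a : ℕ → A) : PowerSeries (PowerSeries A) :=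
  PowerSeries.mk fun n => PowerSeries.C (a n)

/-- The rescaled generating function `a(ct)` in the second variable `t`. -/
def serTc {F : Type*} [Field F] {A : Type*} [Ring A] [Algebra F A] (c : F) (a : ℕ → A) :
    PowerSeries (PowerSeries A) := PowerSeries.mk fun n => PowerSeries.C (c ^ n • a n)

/-- The variable `s` viewed in the two-variable power series ring. -/
def sVar (A : Type*) [Ring A] : PowerSeries (PowerSeries A) :=
  PowerSeries.C (PowerSeries.X : PowerSeries A)

/-- The variable `t` viewed in the two-variable power series ring. -/
def tVar (A : Type*) [Ring A] : PowerSeries (PowerSeries A) := PowerSeries.X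

/-- Elements of an `F`-algebra satisfying the defining relations of the alternating
central extension `𝒰_q^+`.  Here `Wm k = 𝒲_{-k}`, `Wp k = 𝒲_{k+1}`, `G k = 𝒢_k`,
`Gt k = 𝒢̃_k` (with `𝒢₀ = 𝒢̃₀ = 1`). -/
structure AltData (F : Type*) [Field F] (q : F) (A : Type*) [Ring A] [Algebra F A] where
  Wm : ℕ → A
  Wp : ℕ → A
  G : ℕ → A
  Gt : ℕ → A
  hG0 : G 0 = 1
  hGt0 : Gt 0 = 1
  rel1 : ∀ k : ℕ, br (Wm 0) (Wp k) = (1 - (q ^ 2)⁻¹) • (Gt (k + 1) - G (k + 1))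
  rel2 : ∀ k : ℕ, br (Wm k) (Wp 0) = (1 - (q ^ 2)⁻¹) • (Gt (k + 1) - G (k + 1))
  rel3 : ∀ k : ℕ, qbr q (Wm 0) (G (k + 1)) = (q - q⁻¹) • Wm (k + 1)
  rel4 : ∀ k : ℕ, qbr q (Gt (k + 1)) (Wm 0) = (q - q⁻¹) • Wm (k + 1)
  rel5 : ∀ k : ℕ, qbr q (G (k + 1)) (Wp 0) = (q - q⁻¹) • Wp (k + 1)
  rel6 : ∀ k : ℕ, qbr q (Wp 0) (Gt (k + 1)) = (q - q⁻¹) • Wp (k + 1)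
  rel7 : ∀ k l : ℕ, br (Wm k) (Wm l) = 0
  rel8 : ∀ k l : ℕ, br (Wp k) (Wp l) = 0
  rel9 : ∀ k l : ℕ, br (Wm k) (Wp l) + br (Wp k) (Wm l) = 0
  rel10 : ∀ k l : ℕ, br (Wm k) (G (l + 1)) + br (G (k + 1)) (Wm l) = 0
  rel11 : ∀ k l : ℕ, br (Wm k) (Gt (l + 1)) + br (Gt (k + 1)) (Wm l) = 0
  rel12 : ∀ k l : ℕ, br (Wp k) (G (l + 1)) + br (G (k + 1)) (Wp l) = 0
  rel13 : ∀ k l : ℕ, br (Wp k) (Gt (l + 1)) + br (Gt (k + 1)) (Wp l) = 0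
  rel14 : ∀ k l : ℕ, br (G (k + 1)) (G (l + 1)) = 0
  rel15 : ∀ k l : ℕ, br (Gt (k + 1)) (Gt (l + 1)) = 0
  rel16 : ∀ k l : ℕ, br (Gt (k + 1)) (G (l + 1)) + br (G (k + 1)) (Gt (l + 1)) = 0

/-- The scalar `ξ = -q²(q-q⁻¹)⁻²`. -/
def xi {F : Type*} [Field F] (q : F) : F := -(q ^ 2) * ((q - q⁻¹)⁻¹) ^ 2

/-- The central elements `𝒵ⁿ∨` (with `𝒵₀∨ = 1`). -/
def Zv {F : Type*} [Field F] (q : F) {A : Type*} [Ring A] [Algebra F A]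
    (D : AltData F q A) (n : ℕ) : A :=
  (∑ k ∈ Finset.range (n + 1), (q ^ ((n : ℤ) - 2 * (k : ℤ))) • (D.G k * D.Gt (n - k))) -
    q • ∑ k ∈ Finset.range n, (q ^ ((n : ℤ) - 1 - 2 * (k : ℤ))) • (D.Wm k * D.Wp (n - 1 - k))

/-! Since `E_δ` commutes with every `𝒢̃ₘ`, the coefficients of `E⁻(ct)𝒢̃(t)` obey
`wₙ₊₁ = 𝒲₀𝒢̃ₙ₊₁ + c(q + q⁻¹)⁻¹[E_δ, wₙ]`, inherited from the recursion defining `E_{nδ+α₀}`.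
The coefficients `𝒲₋ₙ` obey the same recursion when `c = qξ`, because
`[E_δ, 𝒲₋ₙ] = (1 - q⁻²)²(1 + q⁻²)(𝒲₀𝒢̃ₙ₊₁ - 𝒲₋ₙ₋₁)` and `ξ` is normalised so that
`qξ(1 - q⁻²)²(1 + q⁻²) = -(q + q⁻¹)`. For `𝒢̃(t)E⁻(q⁻¹ξt)` the initial term is `𝒢̃ₙ₊₁𝒲₀`
instead, and the `q`-commutation relation between `𝒢̃ₙ₊₁` and `𝒲₀` accounts for the factor
`q⁻²`. The series `𝒲⁺(t)` is handled in the same way with `[𝒲ₙ₊₁, E_δ]`.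
-/

section Commutator
variable {A : Type*} [Ring A] {e g : A}

lemma Commute.br_mul_right (h : Commute e g) (y : A) : br e (y * g) = br e y * g := by
  rw [br, br, sub_mul, mul_assoc y, ← h.eq, ← mul_assoc, ← mul_assoc]

lemma Commute.br_mul_left (h : Commute e g) (y : A) : br e (g * y) = g * br e y := by
  rw [br, br, mul_sub, ← mul_assoc, h.eq, mul_assoc, mul_assoc]

lemma br_antisymm (x y : A) : br x y = -br y x :=
  (neg_sub _ _).symm

lemma br_sum {ι : Type*} (s : Finset ι) (e : A) (y : ι → A) :
    br e (∑ i ∈ s, y i) = ∑ i ∈ s, br e (y i) := by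
  simp only [br, Finset.mul_sum, Finset.sum_mul, Finset.sum_sub_distrib]

end Commutator

namespace PowerSeries
variable {R A : Type*} [CommRing R] [Ring A] [Algebra R A] (c : R) (e : A) {x g w : ℕ → A}

theorem mk_eq_mk_mul_mk_of_br (hg : ∀ m, Commute e (g m)) (hg0 : g 0 = 1)
    (hx : ∀ k, x (k + 1) = c • br e (x k)) (hw0 : w 0 = x 0)
    (hw : ∀ n, w (n + 1) = x 0 * g (n + 1) + c • br e (w n)) :
    mk w = mk x * mk g := by
  ext n
  simp only [coeff_mk, coeff_mul]
  induction n with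
  | zero => simp [hw0, hg0]
  | succ n ih =>
    simp only [Finset.Nat.sum_antidiagonal_succ, hw, ih, br_sum, Finset.smul_sum, hx,
      smul_mul_assoc, (hg _).br_mul_right]

theorem mk_eq_mk_mul_mk_of_br' (hg : ∀ m, Commute e (g m)) (hg0 : g 0 = 1)
    (hx : ∀ k, x (k + 1) = c • br e (x k)) (hw0 : w 0 = x 0)
    (hw : ∀ n, w (n + 1) = g (n + 1) * x 0 + c • br e (w n)) :
    mk w = mk g * mk x := by
  ext n
  simp only [coeff_mk, coeff_mul]
  induction n with
  | zero => simp [hw0, hg0]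
  | succ n ih =>
    simp only [Finset.Nat.sum_antidiagonal_succ', hw, ih, br_sum, Finset.smul_sum, hx,
      mul_smul_comm, (hg _).br_mul_left]

end PowerSeries

section Scalars
variable {F : Type*} [Field F] {q : F}

lemma sq_sub_one_ne_zero_of_pow_four_ne_one (h : q ^ 4 ≠ 1) : q ^ 2 - 1 ≠ 0 :=
  fun h' => h (by linear_combination (q ^ 2 + 1) * h')

lemma sq_add_one_ne_zero_of_pow_four_ne_one (h : q ^ 4 ≠ 1) : q ^ 2 + 1 ≠ 0 :=
  fun h' => h (by linear_combination (q ^ 2 - 1) * h')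

lemma mul_xi_mul_eq_neg_mul_inv (hq0 : q ≠ 0) (hq4 : q ^ 4 ≠ 1) (a : F) :
    a * xi q * (q + q⁻¹)⁻¹ * ((1 - q⁻¹ ^ 2) ^ 2 * (1 + q⁻¹ ^ 2)) = -(a * q⁻¹) := by
  have := sq_sub_one_ne_zero_of_pow_four_ne_one hq4
  have := sq_add_one_ne_zero_of_pow_four_ne_one hq4
  rw [xi]
  field_simp

end Scalars

section QCommutator
variable {F : Type*} [Field F] {q : F} {A : Type*} [Ring A] [Algebra F A]

lemma mul_eq_of_qbr_eq (hq0 : q ≠ 0) {X Y Z : A} {c : F} (h : qbr q X Y = c • Z) :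
    X * Y = q⁻¹ ^ 2 • (Y * X) + (q⁻¹ * c) • Z := by
  rw [qbr, sub_eq_iff_eq_add'] at h
  rw [← one_smul F (X * Y), ← inv_mul_cancel₀ hq0, mul_smul, h]
  module

lemma mul_eq_of_qbr_eq' (hq0 : q ≠ 0) {X Y Z : A} {c : F} (h : qbr q X Y = c • Z) :
    Y * X = q ^ 2 • (X * Y) - (q * c) • Z := by
  rw [qbr, sub_eq_iff_eq_add, ← sub_eq_iff_eq_add'] at h
  rw [← one_smul F (Y * X), ← mul_inv_cancel₀ hq0, mul_smul, ← h]
  module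

end QCommutator

lemma mul_mul_eq_of_mul_eq {A : Type*} [Semigroup A] {a b c : A} (h : a * b = c) (x : A) :
    a * (b * x) = c * x := by
  rw [← mul_assoc, h]

namespace AltData
variable {F : Type*} [Field F] {q : F} {A : Type*} [Ring A] [Algebra F A] (D : AltData F q A)

lemma Wm_zero_mul_Gt (hq0 : q ≠ 0) (k : ℕ) :
    D.Wm 0 * D.Gt (k + 1) = q ^ 2 • (D.Gt (k + 1) * D.Wm 0) - (q * (q - q⁻¹)) • D.Wm (k + 1) :=
  mul_eq_of_qbr_eq' hq0 (D.rel4 k)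

lemma Gt_mul_Wm_zero (hq0 : q ≠ 0) (k : ℕ) :
    D.Gt (k + 1) * D.Wm 0 = q⁻¹ ^ 2 • (D.Wm 0 * D.Gt (k + 1)) + (q⁻¹ * (q - q⁻¹)) • D.Wm (k + 1) :=
  mul_eq_of_qbr_eq hq0 (D.rel4 k)

lemma Wp_zero_mul_Gt (hq0 : q ≠ 0) (k : ℕ) :
    D.Wp 0 * D.Gt (k + 1) = q⁻¹ ^ 2 • (D.Gt (k + 1) * D.Wp 0) + (q⁻¹ * (q - q⁻¹)) • D.Wp (k + 1) :=
  mul_eq_of_qbr_eq hq0 (D.rel6 k)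

lemma Wm_zero_mul_G (hq0 : q ≠ 0) (k : ℕ) :
    D.Wm 0 * D.G (k + 1) = q⁻¹ ^ 2 • (D.G (k + 1) * D.Wm 0) + (q⁻¹ * (q - q⁻¹)) • D.Wm (k + 1) :=
  mul_eq_of_qbr_eq hq0 (D.rel3 k)

lemma Wp_zero_mul_G (hq0 : q ≠ 0) (k : ℕ) :
    D.Wp 0 * D.G (k + 1) = q ^ 2 • (D.G (k + 1) * D.Wp 0) - (q * (q - q⁻¹)) • D.Wp (k + 1) :=
  mul_eq_of_qbr_eq' hq0 (D.rel5 k)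

lemma Wm_zero_mul_Wp (k : ℕ) :
    D.Wm 0 * D.Wp k = D.Wp k * D.Wm 0 + (1 - (q ^ 2)⁻¹) • (D.Gt (k + 1) - D.G (k + 1)) := by
  rw [← D.rel1 k, br]
  abel

lemma Wp_zero_mul_Wm (k : ℕ) :
    D.Wp 0 * D.Wm k = D.Wm k * D.Wp 0 - (1 - (q ^ 2)⁻¹) • (D.Gt (k + 1) - D.G (k + 1)) := by
  rw [← D.rel2 k, br]
  abel

lemma Wm_zero_mul_Wm (k : ℕ) : D.Wm 0 * D.Wm k = D.Wm k * D.Wm 0 :=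
  sub_eq_zero.mp (D.rel7 0 k)

lemma Wp_zero_mul_Wp (k : ℕ) : D.Wp 0 * D.Wp k = D.Wp k * D.Wp 0 :=
  sub_eq_zero.mp (D.rel8 0 k)

/- Moving `𝒢̃_{k+1}` to the left through `𝒲₀` and `𝒲₁` leaves the correction
`q⁻¹(q - q⁻¹)([𝒲_{k+2}, 𝒲₀] + [𝒲_{-k-1}, 𝒲₁])`, which vanishes by `rel1` and `rel2`. -/
lemma commute_Edel_Gt (hq0 : q ≠ 0) (m : ℕ) : Commute (Edel q (D.Wm 0) (D.Wp 0)) (D.Gt m) := by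
  cases m with
  | zero => rw [D.hGt0]; exact Commute.one_right _
  | succ k =>
    simp only [Commute, SemiconjBy, Edel, sub_mul, mul_sub, add_mul, mul_add, smul_mul_assoc,
      mul_smul_comm, smul_sub, smul_add, mul_assoc,
      D.Wm_zero_mul_Gt hq0 k, mul_mul_eq_of_mul_eq (D.Wm_zero_mul_Gt hq0 k),
      D.Wp_zero_mul_Gt hq0 k, mul_mul_eq_of_mul_eq (D.Wp_zero_mul_Gt hq0 k),
      D.Wm_zero_mul_Wp (k + 1), D.Wp_zero_mul_Wm (k + 1)]
    match_scalars <;> field_simp <;> ring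

lemma br_Edel_Wm (hq0 : q ≠ 0) (n : ℕ) :
    br (Edel q (D.Wm 0) (D.Wp 0)) (D.Wm n) =
      ((1 - q⁻¹ ^ 2) ^ 2 * (1 + q⁻¹ ^ 2)) • (D.Wm 0 * D.Gt (n + 1) - D.Wm (n + 1)) := by
  simp only [br, Edel, sub_mul, mul_sub, mul_add, smul_mul_assoc, mul_smul_comm,
    smul_sub, smul_add, mul_assoc, D.Wm_zero_mul_Wm n, mul_mul_eq_of_mul_eq (D.Wm_zero_mul_Wm n),
    D.Wp_zero_mul_Wm n, mul_mul_eq_of_mul_eq (D.Wp_zero_mul_Wm n),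
    D.Wm_zero_mul_Gt hq0 n, D.Wm_zero_mul_G hq0 n]
  match_scalars <;> field_simp <;> ring

lemma br_Wp_Edel (hq0 : q ≠ 0) (n : ℕ) :
    br (D.Wp n) (Edel q (D.Wm 0) (D.Wp 0)) =
      ((1 - q⁻¹ ^ 2) ^ 2 * (1 + q⁻¹ ^ 2)) • (D.Gt (n + 1) * D.Wp 0 - D.Wp (n + 1)) := by
  simp only [br, Edel, sub_mul, mul_sub, add_mul, mul_add, smul_mul_assoc, mul_smul_comm,
    smul_sub, smul_add, mul_assoc, D.Wp_zero_mul_Wp n, mul_mul_eq_of_mul_eq (D.Wp_zero_mul_Wp n),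
    D.Wm_zero_mul_Wp n, mul_mul_eq_of_mul_eq (D.Wm_zero_mul_Wp n),
    D.Wp_zero_mul_Gt hq0 n, D.Wp_zero_mul_G hq0 n]
  match_scalars <;> field_simp <;> ring

theorem ser_Wm_eq_serc_Em_mul (hq0 : q ≠ 0) (hq4 : q ^ 4 ≠ 1) :
    ser D.Wm = serc (q * xi q) (Em q (D.Wm 0) (D.Wp 0)) * ser D.Gt := by
  refine PowerSeries.mk_eq_mk_mul_mk_of_br (q * xi q * (q + q⁻¹)⁻¹) _
    (D.commute_Edel_Gt hq0) D.hGt0 (fun k => ?_) (by simp [Em]) (fun n => ?_)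
  · simp only [Em, br, pow_succ, smul_sub, mul_smul_comm, smul_mul_assoc, smul_smul]
    module
  · rw [D.br_Edel_Wm hq0, Em, pow_zero, one_smul, smul_smul, mul_xi_mul_eq_neg_mul_inv hq0 hq4,
      mul_inv_cancel₀ hq0]
    module

theorem ser_Wm_eq_mul_serc_Em (hq0 : q ≠ 0) (hq4 : q ^ 4 ≠ 1) :
    ser D.Wm = ser D.Gt * serc (q⁻¹ * xi q) (Em q (D.Wm 0) (D.Wp 0)) := by
  refine PowerSeries.mk_eq_mk_mul_mk_of_br' (q⁻¹ * xi q * (q + q⁻¹)⁻¹) _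
    (D.commute_Edel_Gt hq0) D.hGt0 (fun k => ?_) (by simp [Em]) (fun n => ?_)
  · simp only [Em, br, pow_succ, smul_sub, mul_smul_comm, smul_mul_assoc, smul_smul]
    module
  · rw [D.br_Edel_Wm hq0, Em, pow_zero, one_smul, smul_smul, mul_xi_mul_eq_neg_mul_inv hq0 hq4,
      D.Gt_mul_Wm_zero hq0]
    match_scalars <;> (field_simp; ring)

theorem ser_Wp_eq_serc_Ep_mul (hq0 : q ≠ 0) (hq4 : q ^ 4 ≠ 1) :
    ser D.Wp = serc (q⁻¹ * xi q) (Ep q (D.Wm 0) (D.Wp 0)) * ser D.Gt := by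
  refine PowerSeries.mk_eq_mk_mul_mk_of_br (-(q⁻¹ * xi q * (q + q⁻¹)⁻¹)) _
    (D.commute_Edel_Gt hq0) D.hGt0 (fun k => ?_) (by simp [Ep]) (fun n => ?_)
  · simp only [Ep, br, pow_succ, smul_sub, mul_smul_comm, smul_mul_assoc, smul_smul]
    module
  · rw [br_antisymm, D.br_Wp_Edel hq0, Ep, pow_zero, one_smul, smul_neg, neg_smul,
      neg_neg, smul_smul, mul_xi_mul_eq_neg_mul_inv hq0 hq4, D.Wp_zero_mul_Gt hq0]
    match_scalars <;> (field_simp; ring)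

theorem ser_Wp_eq_mul_serc_Ep (hq0 : q ≠ 0) (hq4 : q ^ 4 ≠ 1) :
    ser D.Wp = ser D.Gt * serc (q * xi q) (Ep q (D.Wm 0) (D.Wp 0)) := by
  refine PowerSeries.mk_eq_mk_mul_mk_of_br' (-(q * xi q * (q + q⁻¹)⁻¹)) _
    (D.commute_Edel_Gt hq0) D.hGt0 (fun k => ?_) (by simp [Ep]) (fun n => ?_)
  · simp only [Ep, br, pow_succ, smul_sub, mul_smul_comm, smul_mul_assoc, smul_smul]
    module
  · rw [br_antisymm, D.br_Wp_Edel hq0, Ep, pow_zero, one_smul, smul_neg, neg_smul,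
      neg_neg, smul_smul, mul_xi_mul_eq_neg_mul_inv hq0 hq4, mul_inv_cancel₀ hq0]
    module

end AltData

/-- `𝒲⁻(t) = E⁻(qξt)𝒢̃(t) = 𝒢̃(t)E⁻(q⁻¹ξt)` and
`𝒲⁺(t) = E⁺(q⁻¹ξt)𝒢̃(t) = 𝒢̃(t)E⁺(qξt)` in the power series ring in `t` over `𝒰_q^+`. -/
theorem stmt10 {F : Type*} [Field F] (q : F) (hq0 : q ≠ 0)
    (hq : ∀ n : ℕ, 0 < n → q ^ n ≠ 1)
    {A : Type*} [Ring A] [Algebra F A] (D : AltData F q A) :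
    ser D.Wm = serc (q * xi q) (Em q (D.Wm 0) (D.Wp 0)) * ser D.Gt ∧
    ser D.Wm = ser D.Gt * serc (q⁻¹ * xi q) (Em q (D.Wm 0) (D.Wp 0)) ∧
    ser D.Wp = serc (q⁻¹ * xi q) (Ep q (D.Wm 0) (D.Wp 0)) * ser D.Gt ∧
    ser D.Wp = ser D.Gt * serc (q * xi q) (Ep q (D.Wm 0) (D.Wp 0)) := by
  have hq4 : q ^ 4 ≠ 1 := hq 4 (by norm_num)
  exact ⟨D.ser_Wm_eq_serc_Em_mul hq0 hq4, D.ser_Wm_eq_mul_serc_Em hq0 hq4,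
    D.ser_Wp_eq_serc_Ep_mul hq0 hq4, D.ser_Wp_eq_mul_serc_Ep hq0 hq4⟩
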